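/- arXiv:1603.01427 — 2 statements merged into one kernel-verified Lean document; each statement's English description precedes it below -/
import Mathlib

section
/- (Generalized Fisher–Jerome theorem, existence part.) Let N be a finite-dimensional normed real vector space and let H = M(ℝ^d) × N, equipped with the norm ‖(w,p)‖_H = ‖w‖_M + ‖p‖_N and the product of the weak* topology on M(ℝ^d) and the norm topology on N. Let F : H → ℝ^M (with M ≥ dim N) be a linear map that is continuous for this topology and satisfies B‖p‖_N ≤ ‖F(0,p)‖₂ for some constant B > 0 and all p ∈ N. Let C ⊂ ℝ^M be a convex compact set such that U = F^{-1}(C) is nonempty. Then the set V = argmin_{(w,p) ∈ U} ‖w‖_M of minimizers is a nonempty, convex, weak*-compact subset of H. -/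
open MeasureTheory ZeroAtInfty

/-- `M(ℝ^d)`, realized via the Riesz–Markov theorem as the continuous dual of
`C₀(ℝ^d, ℝ)`, endowed with its weak* topology. -/
abbrev MeasSpace (d : ℕ) := WeakDual ℝ C₀(EuclideanSpace ℝ (Fin d), ℝ)

/-- The total-variation norm `‖·‖_M`, i.e. the dual norm on `(C₀(ℝ^d,ℝ))'`. -/
noncomputable def mNorm {d : ℕ} (w : MeasSpace d) : ℝ := ‖WeakDual.toStrongDual w‖

/-!
The objective `(w, p) ↦ ‖w‖_M` is convex and, by Banach–Alaoglu, weak*-lower semicontinuous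
with weak*-compact sublevel sets in `w`. The lower bound `B ‖p‖ ≤ ‖F(0, p)‖` makes it coercive on
`U` in the `p` variable too: writing `F(0, p) = F(w, p) - F(w, 0)`, both terms stay bounded when
`F(w, p)` ranges over the compact `C` and `w` over a weak*-compact ball. Hence a sublevel set of the
objective on `U` is compact, a minimizer exists, and the set of minimizers is a closed subset of
that sublevel set; it is convex as a sublevel set of a convex function on a convex set.
-/

open Set

section Minimizers

variable {X β : Type*} {f : X → β} {U : Set X}

theorem IsMinOn.setOf_isMinOn_eq [Preorder β] {a : X} (hmin : IsMinOn f U a) (ha : a ∈ U) :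
    {x ∈ U | IsMinOn f U x} = {x ∈ U | f x ≤ f a} := by
  ext x
  refine ⟨fun ⟨hx, hxmin⟩ => ⟨hx, hxmin ha⟩, fun ⟨hx, hxa⟩ => ⟨hx, fun v hv => ?_⟩⟩
  exact hxa.trans (hmin hv)

theorem ConvexOn.convex_setOf_isMinOn {𝕜 : Type*} [Semiring 𝕜] [PartialOrder 𝕜]
    [AddCommMonoid X] [SMul 𝕜 X] [AddCommMonoid β] [PartialOrder β] [IsOrderedAddMonoid β]
    [Module 𝕜 β] [PosSMulMono 𝕜 β]
    (hf : ConvexOn 𝕜 U f) : Convex 𝕜 {x ∈ U | IsMinOn f U x} := by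
  rcases eq_empty_or_nonempty {x ∈ U | IsMinOn f U x} with hempty | ⟨a, ha, hmin⟩
  · rw [hempty]
    exact convex_empty
  · rw [hmin.setOf_isMinOn_eq ha]
    exact hf.convex_le (f a)

theorem LowerSemicontinuous.nonempty_and_isCompact_setOf_isMinOn [TopologicalSpace X]
    [LinearOrder β] (hf : LowerSemicontinuous f) {x₀ : X} (hx₀ : x₀ ∈ U)
    (hK : IsCompact (U ∩ f ⁻¹' Iic (f x₀))) :
    {x ∈ U | IsMinOn f U x}.Nonempty ∧ IsCompact {x ∈ U | IsMinOn f U x} := by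
  obtain ⟨a, ⟨haU, hax₀⟩, haK⟩ :=
    (hf.lowerSemicontinuousOn _).exists_isMinOn (s := U ∩ f ⁻¹' Iic (f x₀))
      ⟨x₀, hx₀, le_rfl⟩ hK
  have hmin : IsMinOn f U a := fun v hv => by
    by_cases hvx₀ : f v ≤ f x₀
    · exact haK ⟨hv, hvx₀⟩
    · exact hax₀.trans (le_of_not_ge hvx₀)
  have hminimizers : {x ∈ U | IsMinOn f U x} = (U ∩ f ⁻¹' Iic (f x₀)) ∩ f ⁻¹' Iic (f a) := by
    rw [hmin.setOf_isMinOn_eq haU]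
    ext x
    constructor
    · rintro ⟨hx, hxa⟩
      exact ⟨⟨hx, hxa.trans hax₀⟩, hxa⟩
    · rintro ⟨⟨hx, -⟩, hxa⟩
      exact ⟨hx, hxa⟩
  rw [hminimizers]
  exact ⟨⟨a, ⟨haU, hax₀⟩, le_rfl⟩, hK.inter_right (hf.isClosed_preimage _)⟩

end Minimizers

theorem WeakDual.lowerSemicontinuous_norm_toStrongDual {𝕜 E : Type*} [NontriviallyNormedField 𝕜]
    [SeminormedAddCommGroup E] [NormedSpace 𝕜 E] :
    LowerSemicontinuous fun w : WeakDual 𝕜 E => ‖toStrongDual w‖ :=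
  lowerSemicontinuous_iff_isClosed_preimage.2 fun r => by
    convert WeakDual.isClosed_closedBall (𝕜 := 𝕜) (E := E) 0 r using 1
    ext w
    simp

theorem WeakDual.convexOn_norm_toStrongDual {E : Type*} [SeminormedAddCommGroup E]
    [NormedSpace ℝ E] : ConvexOn ℝ univ fun w : WeakDual ℝ E => ‖toStrongDual w‖ :=
  (convexOn_norm (E := StrongDual ℝ E) convex_univ).comp_linearMap
    (toStrongDual.toLinearMap : WeakDual ℝ E →ₗ[ℝ] StrongDual ℝ E)

theorem isCompact_setOf_fst_mem_and_map_mem {E N G : Type*} [AddCommGroup E] [Module ℝ E]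
    [TopologicalSpace E] [SeminormedAddCommGroup N] [Module ℝ N] [ProperSpace N]
    [NormedAddCommGroup G] [Module ℝ G] (F : E × N →L[ℝ] G) {B : ℝ} (hB : 0 < B)
    (hlow : ∀ p : N, B * ‖p‖ ≤ ‖F (0, p)‖) {S : Set E} (hS : IsCompact S) {C : Set G}
    (hC : IsCompact C) : IsCompact {u : E × N | u.1 ∈ S ∧ F u ∈ C} := by
  obtain ⟨R₁, hR₁⟩ := isBounded_iff_forall_norm_le.1
    (hS.image (F.continuous.comp (Continuous.prodMk_left (0 : N)))).isBounded
  obtain ⟨R₂, hR₂⟩ := isBounded_iff_forall_norm_le.1 hC.isBounded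
  have hsnd : ∀ u : E × N, u.1 ∈ S → F u ∈ C → ‖u.2‖ ≤ (R₁ + R₂) / B := fun u hu hFu => by
    have hsplit : F (0, u.2) = F u - F (u.1, 0) := by
      rw [← map_sub, Prod.mk_sub_mk, sub_self, sub_zero]
    rw [le_div_iff₀ hB, mul_comm]
    calc B * ‖u.2‖ ≤ ‖F u - F (u.1, 0)‖ := hsplit ▸ hlow u.2
      _ ≤ ‖F u‖ + ‖F (u.1, 0)‖ := norm_sub_le _ _
      _ ≤ R₂ + R₁ := add_le_add (hR₂ _ hFu) (hR₁ _ ⟨u.1, hu, rfl⟩)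
      _ = R₁ + R₂ := add_comm _ _
  convert (hS.prod (isCompact_closedBall (0 : N) ((R₁ + R₂) / B))).inter_right
    (hC.isClosed.preimage F.continuous) using 1
  ext u
  refine ⟨fun ⟨hu, hFu⟩ => ⟨⟨hu, ?_⟩, hFu⟩, fun ⟨⟨hu, _⟩, hFu⟩ => ⟨hu, hFu⟩⟩
  simpa using hsnd u hu hFu

theorem fisherJerome_existence_general
    (d M : ℕ) (N : Type*) [NormedAddCommGroup N] [NormedSpace ℝ N]
    [FiniteDimensional ℝ N]
    (F : (MeasSpace d × N) →L[ℝ] EuclideanSpace ℝ (Fin M))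
    (B : ℝ) (hB : 0 < B) (hlow : ∀ p : N, B * ‖p‖ ≤ ‖F (0, p)‖)
    (C : Set (EuclideanSpace ℝ (Fin M))) (hCconv : Convex ℝ C) (hCcomp : IsCompact C)
    (U : Set (MeasSpace d × N)) (hU : U = F ⁻¹' C) (hUne : U.Nonempty)
    (V : Set (MeasSpace d × N))
    (hV : V = {u ∈ U | ∀ v ∈ U, mNorm u.1 ≤ mNorm v.1}) :
    V.Nonempty ∧ Convex ℝ V ∧ IsCompact V := by
  subst hU hV
  set f : MeasSpace d × N → ℝ := fun u => mNorm u.1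
  have hf_lsc : LowerSemicontinuous f :=
    WeakDual.lowerSemicontinuous_norm_toStrongDual.comp continuous_fst
  have hf_conv : ConvexOn ℝ (F ⁻¹' C) f :=
    (WeakDual.convexOn_norm_toStrongDual.comp_linearMap (LinearMap.fst ℝ _ N)).subset
      (subset_univ _) (hCconv.linear_preimage F.toLinearMap)
  obtain ⟨u₀, hu₀⟩ := hUne
  have hK : IsCompact (F ⁻¹' C ∩ f ⁻¹' Iic (f u₀)) := by
    convert isCompact_setOf_fst_mem_and_map_mem F hB hlow
      (WeakDual.isCompact_closedBall 0 (f u₀)) hCcomp using 1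
    ext u
    simp [f, mNorm, and_comm]
  obtain ⟨hne, hcomp⟩ := hf_lsc.nonempty_and_isCompact_setOf_isMinOn hu₀ hK
  exact ⟨hne, hf_conv.convex_setOf_isMinOn, hcomp⟩

/-- **generalized Fisher–Jerome theorem, existence part.**
Let `N` be a finite-dimensional normed real space, `H = M(ℝ^d) × N` with the
product of the weak* topology and the norm topology, `F : H → ℝ^M` (with
`M ≥ dim N`) linear and continuous for this topology, satisfying
`B ‖p‖_N ≤ ‖F(0,p)‖₂` for some `B > 0` and all `p ∈ N`. If `C ⊂ ℝ^M` is convex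
and compact with `U = F⁻¹(C)` nonempty, then the set `V` of minimizers of
`‖w‖_M` over `U` is nonempty, convex, and weak*-compact. -/
theorem fisherJerome_existence
    (d M : ℕ) (N : Type*) [NormedAddCommGroup N] [NormedSpace ℝ N]
    [FiniteDimensional ℝ N] (hdim : Module.finrank ℝ N ≤ M)
    (F : (MeasSpace d × N) →L[ℝ] EuclideanSpace ℝ (Fin M))
    (B : ℝ) (hB : 0 < B) (hlow : ∀ p : N, B * ‖p‖ ≤ ‖F (0, p)‖)
    (C : Set (EuclideanSpace ℝ (Fin M))) (hCconv : Convex ℝ C) (hCcomp : IsCompact C)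
    (U : Set (MeasSpace d × N)) (hU : U = F ⁻¹' C) (hUne : U.Nonempty)
    (V : Set (MeasSpace d × N))
    (hV : V = {u ∈ U | ∀ v ∈ U, mNorm u.1 ≤ mNorm v.1}) :
    V.Nonempty ∧ Convex ℝ V ∧ IsCompact V :=
  fisherJerome_existence_general d M N F B hB hlow C hCconv hCcomp U hU hUne V hV
end

section
/- (Explicit kernel of the stabilized right-inverse of D^{N₀}.) Let n₀ ≥ 0 be an integer and define, for x, y ∈ ℝ, g_φ(x,y) = (x−y)₊^{n₀}/n₀! − Σ_{n=0}^{n₀} (x^n/n!) · ((−y)₊^{n₀−n}/(n₀−n)!), where t₊^m = t^m if t ≥ 0 and 0 otherwise. Then g_φ admits the piecewise closed form: g_φ(x,y) = ((x−y)^{n₀}/n₀!) · 1_{(0,x]}(y) when x ≥ 0, and g_φ(x,y) = −((x−y)^{n₀}/n₀!) · 1_{(x,0]}(y) when x < 0, where 1_{(a,b]} denotes the indicator function of the half-open interval (a,b]. -/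
/-- The one-sided power `t₊^m`: equal to `t^m` if `t ≥ 0` and `0` otherwise. -/
noncomputable def posPow (t : ℝ) (m : ℕ) : ℝ := if 0 ≤ t then t ^ m else 0

lemma binom_sum (n₀ : ℕ) (a b : ℝ) :
    ∑ n ∈ Finset.range (n₀ + 1),
      a ^ n / (n.factorial : ℝ) * (b ^ (n₀ - n) / ((n₀ - n).factorial : ℝ))
      = (a + b) ^ n₀ / (n₀.factorial : ℝ) := by
  rw [add_pow, Finset.sum_div]
  refine Finset.sum_congr rfl fun k hk => ?_
  have hk' : k ≤ n₀ := Nat.lt_succ_iff.mp (Finset.mem_range.mp hk)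
  have h := Nat.choose_mul_factorial_mul_factorial hk'
  have hkf : (k.factorial : ℝ) ≠ 0 := Nat.cast_ne_zero.mpr k.factorial_ne_zero
  have hnf : ((n₀ - k).factorial : ℝ) ≠ 0 := Nat.cast_ne_zero.mpr (n₀ - k).factorial_ne_zero
  have hn : ((n₀).factorial : ℝ) ≠ 0 := Nat.cast_ne_zero.mpr n₀.factorial_ne_zero
  field_simp
  rw [← h]
  push_cast
  ring

/-- **explicit kernel of the stabilized right-inverse of `D^{N₀}`.**
For an integer `n₀ ≥ 0`, the kernel
`g_φ(x,y) = (x−y)₊^{n₀}/n₀! − Σ_{n=0}^{n₀} (xⁿ/n!) ((−y)₊^{n₀−n}/(n₀−n)!)`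
admits the piecewise closed form
`g_φ(x,y) = ((x−y)^{n₀}/n₀!) 1_{(0,x]}(y)` for `x ≥ 0` and
`g_φ(x,y) = −((x−y)^{n₀}/n₀!) 1_{(x,0]}(y)` for `x < 0`. -/
theorem kernel_piecewise_closed_form (n₀ : ℕ) (x y : ℝ) :
    (0 ≤ x →
      posPow (x - y) n₀ / (n₀.factorial : ℝ) -
          ∑ n ∈ Finset.range (n₀ + 1),
            x ^ n / (n.factorial : ℝ) * (posPow (-y) (n₀ - n) / ((n₀ - n).factorial : ℝ))
        = Set.indicator (Set.Ioc 0 x) (fun y' => (x - y') ^ n₀ / (n₀.factorial : ℝ)) y) ∧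
    (x < 0 →
      posPow (x - y) n₀ / (n₀.factorial : ℝ) -
          ∑ n ∈ Finset.range (n₀ + 1),
            x ^ n / (n.factorial : ℝ) * (posPow (-y) (n₀ - n) / ((n₀ - n).factorial : ℝ))
        = - Set.indicator (Set.Ioc x 0) (fun y' => (x - y') ^ n₀ / (n₀.factorial : ℝ)) y) := by
  by_cases hy : 0 ≤ -y
  · -- y ≤ 0 : sum equals binomial
    have hsum : ∑ n ∈ Finset.range (n₀ + 1),
        x ^ n / (n.factorial : ℝ) * (posPow (-y) (n₀ - n) / ((n₀ - n).factorial : ℝ))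
        = (x - y) ^ n₀ / (n₀.factorial : ℝ) := by
      have := binom_sum n₀ x (-y)
      simp only [posPow, if_pos hy]
      rw [this]; ring_nf
    rw [hsum]
    have hy' : y ≤ 0 := by linarith
    constructor
    · intro hx
      have hxy : 0 ≤ x - y := by linarith
      rw [Set.indicator_of_notMem (by simp [Set.mem_Ioc]; intro h; linarith)]
      unfold posPow; rw [if_pos hxy]; ring
    · intro hx
      by_cases hxy : x < y
      · rw [Set.indicator_of_mem (Set.mem_Ioc.mpr ⟨hxy, hy'⟩)]
        have h0 : ¬ (0 : ℝ) ≤ x - y := by linarith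
        unfold posPow; rw [if_neg h0]; ring
      · push_neg at hxy
        rw [Set.indicator_of_notMem (by simp [Set.mem_Ioc]; intro h; linarith)]
        have h0 : (0 : ℝ) ≤ x - y := by linarith
        unfold posPow; rw [if_pos h0]; ring
  · -- y > 0 : sum is 0
    have hy' : 0 < y := by linarith
    have hsum : ∑ n ∈ Finset.range (n₀ + 1),
        x ^ n / (n.factorial : ℝ) * (posPow (-y) (n₀ - n) / ((n₀ - n).factorial : ℝ)) = 0 := by
      refine Finset.sum_eq_zero fun n _ => ?_
      unfold posPow; rw [if_neg hy]; simp
    rw [hsum, sub_zero]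
    constructor
    · intro hx
      by_cases hxy : y ≤ x
      · rw [Set.indicator_of_mem (Set.mem_Ioc.mpr ⟨hy', hxy⟩)]
        have h0 : (0 : ℝ) ≤ x - y := by linarith
        unfold posPow; rw [if_pos h0]
      · push_neg at hxy
        rw [Set.indicator_of_notMem (by simp [Set.mem_Ioc]; intro h; linarith)]
        have h0 : ¬ (0 : ℝ) ≤ x - y := by linarith
        unfold posPow; rw [if_neg h0]; simp
    · intro hx
      rw [Set.indicator_of_notMem (by simp [Set.mem_Ioc]; intro h; linarith)]
      have h0 : ¬ (0 : ℝ) ≤ x - y := by linarith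
      unfold posPow; rw [if_neg h0]; simp
end
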